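/- (Lemma III.2, summability part) Let Assumption 1 hold and let (x^k), (y^k), (p^k) be BADMM iterates. If the sequence z^k := (x^k, y^k, p^k) is bounded, then ∑_{k=0}^∞ ‖z^k − z^{k+1}‖² < ∞; in particular ‖z^k − z^{k+1}‖ → 0 as k → ∞. -/

import Mathlib

/-!
The `y`-step does not increase `L_α`, the `x`-step decreases it by `μ₁/2 ‖x^{k+1} - x^k‖²`
(strong convexity of the `x`-subproblem), and the dual step increases it by
`‖p^{k+1} - p^k‖² / α`. Optimality of the `x`-step gives
`Aᵀ p^{k+1} = ∇φ(x^k) - ∇φ(x^{k+1}) - ∇f(x^{k+1})`, so `AAᵀ ⪰ μ₀ I` bounds each dual step by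
the last two primal steps. For `α` above the threshold, `L_α(z^{k+1}) + c ‖x^{k+1} - x^k‖²`
therefore decreases by a fixed multiple of `‖x^{k+2} - x^{k+1}‖²`; it is bounded below along the
bounded iterates, so the `x`-steps are square-summable, hence so are the dual steps, and so are
the `y`-steps because `B (y^{k+2} - y^{k+1})` is a combination of `A`-images of `x`-steps and of
dual steps and `B` is injective.
-/

open scoped InnerProductSpace

/-- The augmented Lagrangian `L_α(x,y,p)`. -/
noncomputable def augL {n₁ n₂ m : ℕ}
    (A : EuclideanSpace ℝ (Fin n₁) →L[ℝ] EuclideanSpace ℝ (Fin m))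
    (B : EuclideanSpace ℝ (Fin n₂) →L[ℝ] EuclideanSpace ℝ (Fin m))
    (f : EuclideanSpace ℝ (Fin n₁) → ℝ) (g : EuclideanSpace ℝ (Fin n₂) → ℝ)
    (α : ℝ) (x : EuclideanSpace ℝ (Fin n₁)) (y : EuclideanSpace ℝ (Fin n₂))
    (p : EuclideanSpace ℝ (Fin m)) : ℝ :=
  f x + g y + ⟪p, A x - B y⟫_ℝ + α / 2 * ‖A x - B y‖ ^ 2

/-- Bregman distance of a differentiable function `h` with gradient `h'`. -/
noncomputable def bregman {n : ℕ} (h : EuclideanSpace ℝ (Fin n) → ℝ)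
    (h' : EuclideanSpace ℝ (Fin n) → EuclideanSpace ℝ (Fin n))
    (u v : EuclideanSpace ℝ (Fin n)) : ℝ :=
  h u - h v - ⟪h' v, u - v⟫_ℝ

open scoped ENNReal
open Set

theorem summable_of_add_mul_le {V a : ℕ → ℝ} {δ : ℝ} (hδ : 0 < δ) (ha : ∀ k, 0 ≤ a k)
    (hV : BddBelow (range V)) (hdesc : ∀ k, V (k + 1) + δ * a k ≤ V k) : Summable a := by
  obtain ⟨M, hM⟩ := hV
  have htel : ∀ N, V N + δ * ∑ k ∈ Finset.range N, a k ≤ V 0 := by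
    intro N
    induction N with
    | zero => simp
    | succ N ih =>
      rw [Finset.sum_range_succ, mul_add]
      linarith [hdesc N]
  refine summable_of_sum_range_le (c := (V 0 - M) / δ) ha fun N => ?_
  rw [le_div_iff₀ hδ, mul_comm]
  linarith [htel N, hM (mem_range_self N)]

theorem summable_of_sufficient_decrease {L d e : ℕ → ℝ} {μ μ₀ α a b : ℝ} (hμ₀ : 0 < μ₀)
    (hα : 0 < α) (hb : 0 ≤ b) (hd : ∀ k, 0 ≤ d k) (he : ∀ k, 0 ≤ e k) (hL : BddBelow (range L))
    (hdesc : ∀ k, L (k + 1) + μ / 2 * d k ≤ L k + e k / α)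
    (hdual : ∀ k, μ₀ * e (k + 1) ≤ a * d (k + 1) + b * d k)
    (hab : 2 * (a + b) < α * μ * μ₀) : Summable d ∧ Summable e := by
  suffices hd' : Summable fun k => d (k + 1) by
    have hdsum := (summable_nat_add_iff 1).1 hd'
    refine ⟨hdsum, (summable_nat_add_iff 1).1 ?_⟩
    exact (((hd'.mul_left a).add (hdsum.mul_left b)).div_const μ₀).of_nonneg_of_le
      (fun k => he (k + 1)) fun k => (le_div_iff₀' hμ₀).2 (hdual k)
  have hαμ₀ : 0 < α * μ₀ := mul_pos hα hμ₀
  have hδ : 0 < μ / 2 - (a + b) / (α * μ₀) := by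
    rw [sub_pos, div_lt_iff₀ hαμ₀]
    linarith
  obtain ⟨M, hM⟩ := hL
  -- The Lyapunov function `L (k + 1) + b / (α * μ₀) * d k` absorbs the `b`-part of the dual bound.
  refine summable_of_add_mul_le
    (V := fun k => L (k + 1) + b / (α * μ₀) * d k) hδ (fun k => hd (k + 1)) ⟨M, ?_⟩ fun k => ?_
  · rintro _ ⟨k, rfl⟩
    linarith [hM (mem_range_self (k + 1)), mul_nonneg (div_nonneg hb hαμ₀.le) (hd k)]
  · have hek : e (k + 1) / α ≤ (a * d (k + 1) + b * d k) / (α * μ₀) := by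
      rw [div_le_div_iff₀ hα hαμ₀]
      nlinarith [hdual k]
    calc L (k + 1 + 1) + b / (α * μ₀) * d (k + 1) + (μ / 2 - (a + b) / (α * μ₀)) * d (k + 1)
        = L (k + 1 + 1) + μ / 2 * d (k + 1) - a * d (k + 1) / (α * μ₀) := by ring
      _ ≤ L (k + 1) + e (k + 1) / α - a * d (k + 1) / (α * μ₀) := by linarith [hdesc (k + 1)]
      _ ≤ L (k + 1) + b / (α * μ₀) * d k := by
        rw [add_div] at hek
        linarith [div_mul_eq_mul_div b (α * μ₀) (d k)]

section SquareSummable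

variable {ι E F : Type*} [NormedAddCommGroup E] [NormedAddCommGroup F]

theorem memℓp_two_iff_summable_sq {u : ι → E} :
    Memℓp u 2 ↔ Summable fun i => ‖u i‖ ^ 2 := by
  rw [memℓp_gen_iff (by norm_num)]
  norm_num

theorem memℓp_nat_add_iff {p : ℝ≥0∞} (hp : 0 < p.toReal) {u : ℕ → E} (j : ℕ) :
    Memℓp (fun k => u (k + j)) p ↔ Memℓp u p := by
  simp only [memℓp_gen_iff hp]
  exact summable_nat_add_iff (f := fun k => ‖u k‖ ^ p.toReal) j

theorem Memℓp.prodMk {p : ℝ≥0∞} {u : ι → E} {v : ι → F} (hu : Memℓp u p) (hv : Memℓp v p) :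
    Memℓp (fun i => (u i, v i)) p :=
  (hu.norm.add hv.norm).mono fun _ => norm_prod_le_iff.2
    ⟨le_add_of_nonneg_right (norm_nonneg _), le_add_of_nonneg_left (norm_nonneg _)⟩

theorem Memℓp.continuousLinearMap_comp {𝕜 : Type*} [NontriviallyNormedField 𝕜]
    [NormedSpace 𝕜 E] [NormedSpace 𝕜 F] {p : ℝ≥0∞} {u : ι → E} (T : E →L[𝕜] F)
    (hu : Memℓp u p) : Memℓp (fun i => T (u i)) p :=
  (hu.norm.const_mul ‖T‖).mono fun i => T.le_opNorm (u i)

end SquareSummable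

section Gradient

variable {E F : Type*} [NormedAddCommGroup E] [InnerProductSpace ℝ E] [CompleteSpace E]
  [NormedAddCommGroup F] [InnerProductSpace ℝ F] [CompleteSpace F]

theorem HasGradientAt.add {f g : E → ℝ} {f' g' x : E} (hf : HasGradientAt f f' x)
    (hg : HasGradientAt g g' x) : HasGradientAt (fun u => f u + g u) (f' + g') x := by
  rw [hasGradientAt_iff_hasFDerivAt, map_add]
  exact hf.hasFDerivAt.add hg.hasFDerivAt

theorem HasGradientAt.sub {f g : E → ℝ} {f' g' x : E} (hf : HasGradientAt f f' x)
    (hg : HasGradientAt g g' x) : HasGradientAt (fun u => f u - g u) (f' - g') x := by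
  rw [hasGradientAt_iff_hasFDerivAt, map_sub]
  exact hf.hasFDerivAt.sub hg.hasFDerivAt

theorem HasGradientAt.add_const {f : E → ℝ} {f' x : E} (hf : HasGradientAt f f' x) (c : ℝ) :
    HasGradientAt (fun u => f u + c) f' x :=
  hasGradientAt_iff_hasFDerivAt.2 (hf.hasFDerivAt.add_const c)

theorem hasGradientAt_inner_sub (w v x : E) : HasGradientAt (fun u => ⟪w, u - v⟫_ℝ) w x := by
  rw [hasGradientAt_iff_hasFDerivAt]
  refine (((innerSL ℝ w).hasFDerivAt).comp x ((hasFDerivAt_id x).sub_const v)).congr_fderiv ?_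
  ext
  simp

theorem hasGradientAt_inner_add_half_sq_norm (A : E →L[ℝ] F) (c p : F) (α : ℝ) (x : E) :
    HasGradientAt (fun u => ⟪p, A u - c⟫_ℝ + α / 2 * ‖A u - c‖ ^ 2)
      (A.adjoint (p + α • (A x - c))) x := by
  have hAc : HasFDerivAt (fun u => A u - c) A x := A.hasFDerivAt.sub_const c
  rw [hasGradientAt_iff_hasFDerivAt]
  refine ((((innerSL ℝ p).hasFDerivAt).comp x hAc).add
    (hAc.norm_sq.const_mul (α / 2))).congr_fderiv ?_
  ext v
  simp only [map_sub, ContinuousLinearMap.sub_comp, add_apply, ContinuousLinearMap.comp_apply,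
    coe_innerSL_apply, smul_apply, sub_apply, nsmul_eq_mul, Nat.cast_ofNat, smul_eq_mul, map_add,
    map_smul, InnerProductSpace.toDual_apply_apply, ContinuousLinearMap.adjoint_inner_left,
    add_right_inj]
  ring

theorem hasGradientAt_half_sq_norm (μ : ℝ) (x : E) :
    HasGradientAt (fun u => μ / 2 * ‖u‖ ^ 2) (μ • x) x := by
  simpa [ContinuousLinearMap.adjoint_id] using
    hasGradientAt_inner_add_half_sq_norm (ContinuousLinearMap.id ℝ E) 0 0 μ x

theorem HasGradientAt.eq_zero_of_forall_le {h : E → ℝ} {G x : E} (hG : HasGradientAt h G x)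
    (hmin : ∀ u, h x ≤ h u) : G = 0 := by
  simpa using IsLocalMin.hasFDerivAt_eq_zero (Filter.Eventually.of_forall hmin) hG.hasFDerivAt

theorem ConvexOn.add_inner_le_of_hasGradientAt {h : E → ℝ} {G v : E}
    (hh : ConvexOn ℝ univ h) (hG : HasGradientAt h G v) (u : E) :
    h v + ⟪G, u - v⟫_ℝ ≤ h u := by
  have hderiv : HasDerivAt (h ∘ AffineMap.lineMap v u) ⟪G, u - v⟫_ℝ (0 : ℝ) := by
    have hG' : HasFDerivAt h (InnerProductSpace.toDual ℝ E G)
        (AffineMap.lineMap (k := ℝ) v u (0 : ℝ)) := by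
      simpa using hG.hasFDerivAt
    simpa using hG'.comp_hasDerivAt (0 : ℝ) AffineMap.hasDerivAt_lineMap
  have := (hh.comp_affineMap (AffineMap.lineMap v u)).le_slope_of_hasDerivAt
    (mem_univ 0) (mem_univ 1) one_pos hderiv
  simp only [slope_def_field, Function.comp_apply, AffineMap.lineMap_apply_one,
    AffineMap.lineMap_apply_zero, sub_zero, div_one] at this
  linarith

theorem ConvexOn.add_inner_add_sq_le_of_hasGradientAt {h : E → ℝ} {G v : E} {μ : ℝ}
    (hh : ConvexOn ℝ univ (fun u => h u - μ / 2 * ‖u‖ ^ 2)) (hG : HasGradientAt h G v) (u : E) :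
    h v + ⟪G, u - v⟫_ℝ + μ / 2 * ‖u - v‖ ^ 2 ≤ h u := by
  have := hh.add_inner_le_of_hasGradientAt (hG.sub (hasGradientAt_half_sq_norm μ v)) u
  simp only [inner_sub_left, real_inner_smul_left, inner_sub_right,
    real_inner_self_eq_norm_sq] at this
  rw [norm_sub_sq_real, inner_sub_right, real_inner_comm v u]
  linarith

end Gradient

theorem mul_sq_norm_sub_le_of_apply_eq {E F : Type*} [NormedAddCommGroup E] [NormedSpace ℝ E]
    [NormedAddCommGroup F] [NormedSpace ℝ F] {T : F →L[ℝ] E} {f' φ' : E → E} {μ₀ ℓf ℓφ : ℝ}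
    (hT : ∀ q, μ₀ * ‖q‖ ^ 2 ≤ ‖T q‖ ^ 2) (hf' : ∀ u v, ‖f' u - f' v‖ ≤ ℓf * ‖u - v‖)
    (hφ' : ∀ u v, ‖φ' u - φ' v‖ ≤ ℓφ * ‖u - v‖) {x₀ x₁ x₂ : E} {q₁ q₂ : F}
    (h₁ : T q₁ = φ' x₀ - φ' x₁ - f' x₁) (h₂ : T q₂ = φ' x₁ - φ' x₂ - f' x₂) :
    μ₀ * ‖q₂ - q₁‖ ^ 2 ≤ 2 * (ℓf + ℓφ) ^ 2 * ‖x₂ - x₁‖ ^ 2 + 2 * ℓφ ^ 2 * ‖x₁ - x₀‖ ^ 2 := by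
  have hsplit : T (q₂ - q₁) = (φ' x₁ - φ' x₀) - (φ' x₂ - φ' x₁) - (f' x₂ - f' x₁) := by
    rw [map_sub, h₁, h₂]
    abel
  have hnorm : ‖T (q₂ - q₁)‖ ≤ (ℓf + ℓφ) * ‖x₂ - x₁‖ + ℓφ * ‖x₁ - x₀‖ := by
    rw [hsplit]
    linarith [norm_sub_le (φ' x₁ - φ' x₀ - (φ' x₂ - φ' x₁)) (f' x₂ - f' x₁),
      norm_sub_le (φ' x₁ - φ' x₀) (φ' x₂ - φ' x₁), hf' x₂ x₁, hφ' x₂ x₁, hφ' x₁ x₀]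
  calc μ₀ * ‖q₂ - q₁‖ ^ 2 ≤ ‖T (q₂ - q₁)‖ ^ 2 := hT _
    _ ≤ ((ℓf + ℓφ) * ‖x₂ - x₁‖ + ℓφ * ‖x₁ - x₀‖) ^ 2 := by gcongr
    _ ≤ 2 * (ℓf + ℓφ) ^ 2 * ‖x₂ - x₁‖ ^ 2 + 2 * ℓφ ^ 2 * ‖x₁ - x₀‖ ^ 2 :=
      add_sq_le.trans_eq (by ring)

local notation "ℝ^" n:max => EuclideanSpace ℝ (Fin n)

section Bregman

variable {n : ℕ} {h : ℝ^n → ℝ} {h' : ℝ^n → ℝ^n}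

theorem bregman_self (v : ℝ^n) : bregman h h' v v = 0 := by
  simp [bregman]

theorem le_bregman_of_convexOn_sub {μ : ℝ} {v : ℝ^n}
    (hh : ConvexOn ℝ univ (fun u => h u - μ / 2 * ‖u‖ ^ 2)) (hv : HasGradientAt h (h' v) v)
    (u : ℝ^n) : μ / 2 * ‖u - v‖ ^ 2 ≤ bregman h h' u v := by
  have := hh.add_inner_add_sq_le_of_hasGradientAt hv u
  rw [bregman]
  linarith

theorem bregman_nonneg {v : ℝ^n} (hh : ConvexOn ℝ univ h) (hv : HasGradientAt h (h' v) v)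
    (u : ℝ^n) : 0 ≤ bregman h h' u v := by
  simpa using le_bregman_of_convexOn_sub (μ := 0) (by simpa using hh) hv u

theorem convexOn_bregman (hh : ConvexOn ℝ univ h) (v : ℝ^n) :
    ConvexOn ℝ univ (fun u => bregman h h' u v) := by
  have hlin := ((innerSL ℝ (h' v)).toLinearMap.concaveOn convex_univ).add_const
    (h v - ⟪h' v, v⟫_ℝ)
  refine (hh.sub hlin).congr fun u _ => ?_
  simp only [ContinuousLinearMap.toLinearMap_innerSL_apply, coe_innerₛₗ_apply, Pi.sub_apply,
    Pi.add_apply, bregman, inner_sub_right]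
  ring

theorem hasGradientAt_bregman {u : ℝ^n} (hu : HasGradientAt h (h' u) u) (v : ℝ^n) :
    HasGradientAt (fun w => bregman h h' w v) (h' u - h' v) u := by
  have := (hu.add_const (-h v)).sub (hasGradientAt_inner_sub (h' v) v u)
  simpa [bregman, sub_eq_add_neg, add_right_comm] using this

end Bregman

section AugmentedLagrangian

variable {n₁ n₂ m : ℕ} {A : ℝ^n₁ →L[ℝ] ℝ^m} {B : ℝ^n₂ →L[ℝ] ℝ^m} {f : ℝ^n₁ → ℝ}
  {g : ℝ^n₂ → ℝ} {α : ℝ}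

theorem hasGradientAt_augL_fst {x G : ℝ^n₁} (hf : HasGradientAt f G x) (y : ℝ^n₂) (p : ℝ^m) :
    HasGradientAt (fun u => augL A B f g α u y p) (G + A.adjoint (p + α • (A x - B y))) x := by
  simpa [augL, add_assoc] using
    (hf.add_const (g y)).add (hasGradientAt_inner_add_half_sq_norm A (B y) p α x)

theorem augL_dual_update {x : ℝ^n₁} {y : ℝ^n₂} {p p' : ℝ^m}
    (hp : p' = p + α • (A x - B y)) :
    augL A B f g α x y p' = augL A B f g α x y p + ‖p' - p‖ ^ 2 / α := by
  subst hp
  simp only [augL, add_sub_cancel_left, inner_add_left, real_inner_smul_left,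
    real_inner_self_eq_norm_sq, norm_smul, Real.norm_eq_abs, mul_pow, sq_abs]
  field_simp
  ring

theorem bddBelow_augL_image (hf : Continuous f) (hg : LowerSemicontinuous g)
    {s : Set (ℝ^n₁ × ℝ^n₂ × ℝ^m)} (hs : Bornology.IsBounded s) :
    BddBelow ((fun z => augL A B f g α z.1 z.2.1 z.2.2) '' s) := by
  have hc : Continuous fun z : ℝ^n₁ × ℝ^n₂ × ℝ^m =>
      f z.1 + ⟪z.2.2, A z.1 - B z.2.1⟫_ℝ + α / 2 * ‖A z.1 - B z.2.1‖ ^ 2 := by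
    fun_prop
  have hlsc : LowerSemicontinuous fun z : ℝ^n₁ × ℝ^n₂ × ℝ^m => augL A B f g α z.1 z.2.1 z.2.2 := by
    have hsplit : (fun z : ℝ^n₁ × ℝ^n₂ × ℝ^m => augL A B f g α z.1 z.2.1 z.2.2) = fun z =>
        (f z.1 + ⟪z.2.2, A z.1 - B z.2.1⟫_ℝ + α / 2 * ‖A z.1 - B z.2.1‖ ^ 2) + g z.2.1 := by
      funext z
      simp only [augL]
      ring
    rw [hsplit]
    exact hc.lowerSemicontinuous.add (hg.comp (continuous_fst.comp continuous_snd))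
  exact ((hlsc.lowerSemicontinuousOn _).bddBelow_of_isCompact hs.isCompact_closure).mono
    (image_mono subset_closure)

end AugmentedLagrangian

section Iteration

variable {n₁ n₂ m : ℕ} {A : ℝ^n₁ →L[ℝ] ℝ^m} {B : ℝ^n₂ →L[ℝ] ℝ^m} {f : ℝ^n₁ → ℝ}
  {g : ℝ^n₂ → ℝ} {α μ : ℝ} {f' φ' : ℝ^n₁ → ℝ^n₁} {φ : ℝ^n₁ → ℝ} {ψ : ℝ^n₂ → ℝ}
  {ψ' : ℝ^n₂ → ℝ^n₂} {x x' : ℝ^n₁} {y y' : ℝ^n₂} {p p' : ℝ^m}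

theorem augL_ystep_le (hψ : ConvexOn ℝ univ ψ) (hψ' : HasGradientAt ψ (ψ' y) y)
    (hy : ∀ w, augL A B f g α x y' p + bregman ψ ψ' y' y ≤
      augL A B f g α x w p + bregman ψ ψ' w y) :
    augL A B f g α x y' p ≤ augL A B f g α x y p := by
  have := hy y
  rw [bregman_self] at this
  linarith [bregman_nonneg hψ hψ' y']

theorem xstep_gradient_eq_zero (hf : HasGradientAt f (f' x') x')
    (hφ : HasGradientAt φ (φ' x') x')
    (hx : ∀ u, augL A B f g α x' y' p + bregman φ φ' x' x ≤
      augL A B f g α u y' p + bregman φ φ' u x) :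
    f' x' + A.adjoint (p + α • (A x' - B y')) + (φ' x' - φ' x) = 0 :=
  ((hasGradientAt_augL_fst hf y' p).add (hasGradientAt_bregman hφ x)).eq_zero_of_forall_le hx

theorem adjoint_dual_update_eq (hf : HasGradientAt f (f' x') x')
    (hφ : HasGradientAt φ (φ' x') x')
    (hx : ∀ u, augL A B f g α x' y' p + bregman φ φ' x' x ≤
      augL A B f g α u y' p + bregman φ φ' u x)
    (hp : p' = p + α • (A x' - B y')) :
    A.adjoint p' = φ' x - φ' x' - f' x' := by
  rw [hp]
  linear_combination (norm := module) xstep_gradient_eq_zero hf hφ hx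

theorem augL_xstep_add_sq_le (hf : HasGradientAt f (f' x') x') (hφ : ConvexOn ℝ univ φ)
    (hφ' : ∀ u, HasGradientAt φ (φ' u) u)
    (hμ : (∀ y p, ConvexOn ℝ univ (fun u => augL A B f g α u y p - μ / 2 * ‖u‖ ^ 2)) ∨
      ConvexOn ℝ univ (fun u => φ u - μ / 2 * ‖u‖ ^ 2))
    (hx : ∀ u, augL A B f g α x' y' p + bregman φ φ' x' x ≤
      augL A B f g α u y' p + bregman φ φ' u x) :
    augL A B f g α x' y' p + μ / 2 * ‖x' - x‖ ^ 2 ≤ augL A B f g α x y' p := by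
  have hx₀ := hx x
  rw [bregman_self] at hx₀
  rcases hμ with hL | hφμ
  · -- `x'` minimizes the `μ`-strongly convex objective of the `x`-step.
    have hΦ : ConvexOn ℝ univ fun u =>
        augL A B f g α u y' p + bregman φ φ' u x - μ / 2 * ‖u‖ ^ 2 :=
      ((hL y' p).add (convexOn_bregman hφ x)).congr fun u _ => by simp only [Pi.add_apply]; ring
    have := hΦ.add_inner_add_sq_le_of_hasGradientAt
      ((hasGradientAt_augL_fst hf y' p).add (hasGradientAt_bregman (hφ' x') x)) x
    rw [xstep_gradient_eq_zero hf (hφ' x') hx, inner_zero_left, norm_sub_rev,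
      bregman_self] at this
    linarith [bregman_nonneg hφ (hφ' x) x']
  · linarith [le_bregman_of_convexOn_sub hφμ (hφ' x) x']

theorem augL_iterate_add_sq_le (hf : HasGradientAt f (f' x') x') (hφ : ConvexOn ℝ univ φ)
    (hφ' : ∀ u, HasGradientAt φ (φ' u) u)
    (hμ : (∀ y p, ConvexOn ℝ univ (fun u => augL A B f g α u y p - μ / 2 * ‖u‖ ^ 2)) ∨
      ConvexOn ℝ univ (fun u => φ u - μ / 2 * ‖u‖ ^ 2))
    (hψ : ConvexOn ℝ univ ψ) (hψ' : HasGradientAt ψ (ψ' y) y)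
    (hy : ∀ w, augL A B f g α x y' p + bregman ψ ψ' y' y ≤
      augL A B f g α x w p + bregman ψ ψ' w y)
    (hx : ∀ u, augL A B f g α x' y' p + bregman φ φ' x' x ≤
      augL A B f g α u y' p + bregman φ φ' u x)
    (hp : p' = p + α • (A x' - B y')) :
    augL A B f g α x' y' p' + μ / 2 * ‖x' - x‖ ^ 2 ≤
      augL A B f g α x y p + ‖p' - p‖ ^ 2 / α := by
  rw [augL_dual_update hp]
  linarith [augL_xstep_add_sq_le hf hφ hφ' hμ hx, augL_ystep_le hψ hψ' hy]

end Iteration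

theorem memℓp_two_sub_of_dual_update {n₁ n₂ m : ℕ} {A : ℝ^n₁ →L[ℝ] ℝ^m} {B : ℝ^n₂ →L[ℝ] ℝ^m}
    {α : ℝ} {x : ℕ → ℝ^n₁} {y : ℕ → ℝ^n₂} {p : ℕ → ℝ^m} (hα : α ≠ 0)
    (hB : Function.Injective B) (hp : ∀ k, p (k + 1) = p k + α • (A (x (k + 1)) - B (y (k + 1))))
    (hx : Memℓp (fun k => x (k + 1) - x k) 2) (hdp : Memℓp (fun k => p (k + 1) - p k) 2) :
    Memℓp (fun k => y (k + 1) - y k) 2 := by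
  obtain ⟨K, -, hK⟩ := B.toLinearMap.exists_antilipschitzWith (LinearMap.ker_eq_bot.2 hB)
  have hBy : ∀ k, B (y (k + 1)) = A (x (k + 1)) - α⁻¹ • (p (k + 1) - p k) := fun k => by
    rw [hp k, add_sub_cancel_left, smul_smul, inv_mul_cancel₀ hα, one_smul, sub_sub_cancel]
  have hBΔ : Memℓp (fun k => B (y (k + 1 + 1) - y (k + 1))) 2 := by
    have hx' := (memℓp_nat_add_iff (by norm_num) 1).2 hx
    have hdp' := (memℓp_nat_add_iff (by norm_num) 1).2 hdp
    convert (hx'.continuousLinearMap_comp A).sub ((hdp'.sub hdp).const_smul α⁻¹) using 1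
    funext k
    simp only [Pi.sub_apply, Pi.smul_apply, map_sub, hBy]
    module
  exact (memℓp_nat_add_iff (by norm_num) 1).1
    ((hBΔ.norm.const_mul K).mono fun k => hK.le_mul_norm (map_zero B.toLinearMap) _)

theorem badmm_lemma_III_2_summable_general
{n₁ n₂ m : ℕ}
    (A : EuclideanSpace ℝ (Fin n₁) →L[ℝ] EuclideanSpace ℝ (Fin m))
    (B : EuclideanSpace ℝ (Fin n₂) →L[ℝ] EuclideanSpace ℝ (Fin m))
    (f : EuclideanSpace ℝ (Fin n₁) → ℝ) (g : EuclideanSpace ℝ (Fin n₂) → ℝ)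
    (f' : EuclideanSpace ℝ (Fin n₁) → EuclideanSpace ℝ (Fin n₁))
    (hfgrad : ∀ u, HasGradientAt f (f' u) u)
    (ℓf : ℝ) (hf' : ∀ u v, ‖f' u - f' v‖ ≤ ℓf * ‖u - v‖)
    (hg : LowerSemicontinuous g)
    (φ : EuclideanSpace ℝ (Fin n₁) → ℝ)
    (φ' : EuclideanSpace ℝ (Fin n₁) → EuclideanSpace ℝ (Fin n₁))
    (hφconv : ConvexOn ℝ Set.univ φ) (hφdiff : ∀ u, HasGradientAt φ (φ' u) u)
    (ℓφ : ℝ) (hφ' : ∀ u v, ‖φ' u - φ' v‖ ≤ ℓφ * ‖u - v‖)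
    (ψ : EuclideanSpace ℝ (Fin n₂) → ℝ)
    (ψ' : EuclideanSpace ℝ (Fin n₂) → EuclideanSpace ℝ (Fin n₂))
    (hψconv : ConvexOn ℝ Set.univ ψ) (hψdiff : ∀ u, HasGradientAt ψ (ψ' u) u)
    (α μ₀ : ℝ) (hα : 0 < α) (hμ₀ : 0 < μ₀)
    (hA : ∀ q : EuclideanSpace ℝ (Fin m),
      μ₀ * ‖q‖ ^ 2 ≤ ‖ContinuousLinearMap.adjoint A q‖ ^ 2)
    (μ₁ : ℝ) (hμ₁ : 0 < μ₁)
    (hsc : (∀ (y : EuclideanSpace ℝ (Fin n₂)) (p : EuclideanSpace ℝ (Fin m)),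
          ConvexOn ℝ Set.univ (fun x => augL A B f g α x y p - μ₁ / 2 * ‖x‖ ^ 2)) ∨
        ConvexOn ℝ Set.univ (fun x => φ x - μ₁ / 2 * ‖x‖ ^ 2))
    (hαbig : α > 4 * ((ℓf + ℓφ) ^ 2 + ℓφ ^ 2) / (μ₁ * μ₀))
    (x : ℕ → EuclideanSpace ℝ (Fin n₁)) (y : ℕ → EuclideanSpace ℝ (Fin n₂))
    (p : ℕ → EuclideanSpace ℝ (Fin m))
    (hy : ∀ k, ∀ y' : EuclideanSpace ℝ (Fin n₂),
      augL A B f g α (x k) (y (k + 1)) (p k) + bregman ψ ψ' (y (k + 1)) (y k) ≤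
        augL A B f g α (x k) y' (p k) + bregman ψ ψ' y' (y k))
    (hx : ∀ k, ∀ x' : EuclideanSpace ℝ (Fin n₁),
      augL A B f g α (x (k + 1)) (y (k + 1)) (p k) + bregman φ φ' (x (k + 1)) (x k) ≤
        augL A B f g α x' (y (k + 1)) (p k) + bregman φ φ' x' (x k))
    (hp : ∀ k, p (k + 1) = p k + α • (A (x (k + 1)) - B (y (k + 1))))
    (hB : Function.Injective B)
    (hbdd : Bornology.IsBounded (Set.range fun k => (x k, y k, p k))) :
    Summable (fun k => ‖((x k, y k, p k) : EuclideanSpace ℝ (Fin n₁) ×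
        EuclideanSpace ℝ (Fin n₂) × EuclideanSpace ℝ (Fin m))
        - (x (k + 1), y (k + 1), p (k + 1))‖ ^ 2) ∧
      Filter.Tendsto (fun k => ‖((x k, y k, p k) : EuclideanSpace ℝ (Fin n₁) ×
          EuclideanSpace ℝ (Fin n₂) × EuclideanSpace ℝ (Fin m))
          - (x (k + 1), y (k + 1), p (k + 1))‖)
        Filter.atTop (nhds 0) := by
  have hf : Continuous f := continuous_iff_continuousAt.2 fun u =>
    (hfgrad u).differentiableAt.continuousAt
  have hstat : ∀ k, A.adjoint (p (k + 1)) = φ' (x k) - φ' (x (k + 1)) - f' (x (k + 1)) :=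
    fun k => adjoint_dual_update_eq (hfgrad _) (hφdiff _) (hx k) (hp k)
  have hL : BddBelow (range fun k => augL A B f g α (x k) (y k) (p k)) := by
    simpa only [← range_comp, Function.comp_def] using bddBelow_augL_image (α := α) hf hg hbdd
  obtain ⟨hdx, hdp⟩ := summable_of_sufficient_decrease (μ := μ₁) hμ₀ hα (by positivity)
    (fun _ => by positivity) (fun _ => by positivity) hL
    (fun k => augL_iterate_add_sq_le (hfgrad _) hφconv hφdiff hsc hψconv (hψdiff _) (hy k) (hx k)
      (hp k))
    (fun k => mul_sq_norm_sub_le_of_apply_eq hA hf' hφ' (hstat k) (hstat (k + 1)))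
    (by rw [gt_iff_lt, div_lt_iff₀ (by positivity)] at hαbig; linarith)
  have hdx' := memℓp_two_iff_summable_sq.2 hdx
  have hdp' := memℓp_two_iff_summable_sq.2 hdp
  have hdy := memℓp_two_sub_of_dual_update hα.ne' hB hp hdx' hdp'
  have hz : Memℓp (fun k => ((x k, y k, p k) : ℝ^n₁ × ℝ^n₂ × ℝ^m) -
      (x (k + 1), y (k + 1), p (k + 1))) 2 :=
    (hdx'.prodMk (hdy.prodMk hdp')).mono' fun k => (norm_sub_rev _ _).le
  have hsum := memℓp_two_iff_summable_sq.1 hz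
  exact ⟨hsum, by simpa using hsum.tendsto_atTop_zero.sqrt⟩

theorem badmm_lemma_III_2_summable
{n₁ n₂ m : ℕ} (hn₁ : 0 < n₁) (hn₂ : 0 < n₂) (hm : 0 < m)
    (A : EuclideanSpace ℝ (Fin n₁) →L[ℝ] EuclideanSpace ℝ (Fin m))
    (B : EuclideanSpace ℝ (Fin n₂) →L[ℝ] EuclideanSpace ℝ (Fin m))
    (f : EuclideanSpace ℝ (Fin n₁) → ℝ) (g : EuclideanSpace ℝ (Fin n₂) → ℝ)
    (f' : EuclideanSpace ℝ (Fin n₁) → EuclideanSpace ℝ (Fin n₁))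
    (hfC1 : ContDiff ℝ 1 f) (hfgrad : ∀ u, HasGradientAt f (f' u) u)
    (ℓf : ℝ) (hℓf : 0 ≤ ℓf) (hf' : ∀ u v, ‖f' u - f' v‖ ≤ ℓf * ‖u - v‖)
    (hg : LowerSemicontinuous g)
    (φ : EuclideanSpace ℝ (Fin n₁) → ℝ)
    (φ' : EuclideanSpace ℝ (Fin n₁) → EuclideanSpace ℝ (Fin n₁))
    (hφconv : ConvexOn ℝ Set.univ φ) (hφdiff : ∀ u, HasGradientAt φ (φ' u) u)
    (ℓφ : ℝ) (hℓφ : 0 ≤ ℓφ) (hφ' : ∀ u v, ‖φ' u - φ' v‖ ≤ ℓφ * ‖u - v‖)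
    (ψ : EuclideanSpace ℝ (Fin n₂) → ℝ)
    (ψ' : EuclideanSpace ℝ (Fin n₂) → EuclideanSpace ℝ (Fin n₂))
    (hψconv : ConvexOn ℝ Set.univ ψ) (hψdiff : ∀ u, HasGradientAt ψ (ψ' u) u)
    (ℓψ : ℝ) (hℓψ : 0 ≤ ℓψ) (hψ' : ∀ u v, ‖ψ' u - ψ' v‖ ≤ ℓψ * ‖u - v‖)
    (α μ₀ : ℝ) (hα : 0 < α) (hμ₀ : 0 < μ₀)
    (hA : ∀ q : EuclideanSpace ℝ (Fin m),
      μ₀ * ‖q‖ ^ 2 ≤ ‖ContinuousLinearMap.adjoint A q‖ ^ 2)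
    (μ₁ : ℝ) (hμ₁ : 0 < μ₁)
    (hsc : (∀ (y : EuclideanSpace ℝ (Fin n₂)) (p : EuclideanSpace ℝ (Fin m)),
          ConvexOn ℝ Set.univ (fun x => augL A B f g α x y p - μ₁ / 2 * ‖x‖ ^ 2)) ∨
        ConvexOn ℝ Set.univ (fun x => φ x - μ₁ / 2 * ‖x‖ ^ 2))
    (hαbig : α > 4 * ((ℓf + ℓφ) ^ 2 + ℓφ ^ 2) / (μ₁ * μ₀))
    (x : ℕ → EuclideanSpace ℝ (Fin n₁)) (y : ℕ → EuclideanSpace ℝ (Fin n₂))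
    (p : ℕ → EuclideanSpace ℝ (Fin m))
    (hy : ∀ k, ∀ y' : EuclideanSpace ℝ (Fin n₂),
      augL A B f g α (x k) (y (k + 1)) (p k) + bregman ψ ψ' (y (k + 1)) (y k) ≤
        augL A B f g α (x k) y' (p k) + bregman ψ ψ' y' (y k))
    (hx : ∀ k, ∀ x' : EuclideanSpace ℝ (Fin n₁),
      augL A B f g α (x (k + 1)) (y (k + 1)) (p k) + bregman φ φ' (x (k + 1)) (x k) ≤
        augL A B f g α x' (y (k + 1)) (p k) + bregman φ φ' x' (x k))
    (hp : ∀ k, p (k + 1) = p k + α • (A (x (k + 1)) - B (y (k + 1))))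
    (hB : Function.Injective B)
    (hbdd : Bornology.IsBounded (Set.range fun k => (x k, y k, p k))) :
    Summable (fun k => ‖((x k, y k, p k) : EuclideanSpace ℝ (Fin n₁) ×
        EuclideanSpace ℝ (Fin n₂) × EuclideanSpace ℝ (Fin m))
        - (x (k + 1), y (k + 1), p (k + 1))‖ ^ 2) ∧
      Filter.Tendsto (fun k => ‖((x k, y k, p k) : EuclideanSpace ℝ (Fin n₁) ×
          EuclideanSpace ℝ (Fin n₂) × EuclideanSpace ℝ (Fin m))
          - (x (k + 1), y (k + 1), p (k + 1))‖)
        Filter.atTop (nhds 0) :=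
  badmm_lemma_III_2_summable_general A B f g f' hfgrad ℓf hf' hg φ φ' hφconv hφdiff ℓφ hφ' ψ ψ'
    hψconv hψdiff α μ₀ hα hμ₀ hA μ₁ hμ₁ hsc hαbig x y p hy hx hp hB hbdd
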